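/- arXiv:1512.07983 — 3 statements merged into one kernel-verified Lean document; each statement's English description precedes it below -/
import Mathlib

section
/- Let C be an n×n complex circulant matrix with monic characteristic polynomial p(z) = det(zI − C), and let C_{n-1} be the (n−1)×(n−1) principal submatrix formed by the first n−1 rows and columns of C. Then p'(z) = n·det(zI_{n-1} − C_{n-1}); in particular, the spectrum of C_{n-1} (with multiplicities) is exactly the set of critical points of p. -/
open Polynomial

open Matrix in
/-- Finset version of `Polynomial.derivative_prod`. -/
private lemma my_derivative_finset_prod {R ι : Type*} [CommSemiring R] [DecidableEq ι]
    (s : Finset ι) (f : ι → R[X]) :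
    derivative (∏ i ∈ s, f i) = ∑ i ∈ s, (∏ j ∈ s.erase i, f j) * derivative (f i) := by
  induction s using Finset.induction_on with
  | empty => simp
  | @insert a s ha ih =>
      rw [Finset.prod_insert ha, derivative_mul, ih, Finset.sum_insert ha,
        Finset.erase_insert ha, Finset.mul_sum, mul_comm (derivative (f a))]
      congr 1
      apply Finset.sum_congr rfl
      intro i hi
      rw [Finset.erase_insert_of_ne (by rintro rfl; exact ha hi),
        Finset.prod_insert (fun h => ha (Finset.mem_of_mem_erase h))]
      ring

open Matrix in
/-- Jacobi-type formula: the derivative of a determinant of a polynomial matrix is the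
sum over columns of the determinant with that column differentiated. -/
private lemma my_derivative_det {n : ℕ} {R : Type*} [CommRing R]
    (M : Matrix (Fin n) (Fin n) R[X]) :
    derivative M.det = ∑ i, (M.updateCol i fun j => derivative (M j i)).det := by
  simp only [det_apply]
  rw [map_sum]
  have key : ∀ σ : Equiv.Perm (Fin n),
      derivative (Equiv.Perm.sign σ • ∏ i, M (σ i) i)
        = ∑ i, Equiv.Perm.sign σ •
            ((∏ j ∈ Finset.univ.erase i, M (σ j) j) * derivative (M (σ i) i)) := by
    intro σ
    simp only [Units.smul_def]
    rw [zsmul_eq_mul, derivative_mul, derivative_intCast, zero_mul, zero_add,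
      my_derivative_finset_prod, Finset.mul_sum]
    exact Finset.sum_congr rfl fun i _ => (zsmul_eq_mul _ _).symm
  simp only [key]
  rw [Finset.sum_comm]
  apply Finset.sum_congr rfl
  intro i _
  apply Finset.sum_congr rfl
  intro σ _
  congr 1
  rw [← Finset.mul_prod_erase Finset.univ _ (Finset.mem_univ i)]
  rw [updateCol_apply, if_pos rfl, mul_comm]
  congr 1
  apply Finset.prod_congr rfl
  intro j hj
  rw [updateCol_apply, if_neg (Finset.ne_of_mem_erase hj)]

open Matrix in
/-- For a "shift invariant" matrix, all principal minors (one row and column deleted)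
are equal. -/
private lemma minor_shift {m : ℕ} (M : Matrix (Fin (m+1)) (Fin (m+1)) ℂ[X])
    (hM : ∀ d x y : Fin (m+1), M (x + d) (y + d) = M x y) (i : Fin (m+1)) :
    (M.submatrix i.succAbove i.succAbove).det
      = (M.submatrix Fin.castSucc Fin.castSucc).det := by
  set d := i + 1 with hd
  set f : Fin m → Fin (m+1) := fun j => j.castSucc + d with hf
  have hinj : Function.Injective f := fun a b h => by
    apply Fin.castSucc_injective
    exact add_right_cancel h
  have hlast : Fin.last m + d = i := by
    apply Fin.ext
    simp [hd, Fin.add_def, Fin.val_last]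
    rw [show m + ((i:ℕ)+1) = (i:ℕ) + (m+1) by omega, Nat.add_mod_right,
      Nat.mod_eq_of_lt i.isLt]
  have hrange : Set.range f = Set.range i.succAbove := by
    rw [Fin.range_succAbove]
    have : Set.range f = (· + d) '' Set.range (Fin.castSucc) := by
      rw [← Set.range_comp]; rfl
    rw [this, ← Fin.succAbove_last, Fin.range_succAbove]
    ext x
    simp only [Set.mem_image, Set.mem_compl_iff, Set.mem_singleton_iff]
    constructor
    · rintro ⟨y, hy, rfl⟩ h
      exact hy (by rwa [← hlast, add_left_injective d |>.eq_iff] at h)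
    · intro hx
      refine ⟨x - d, fun h => hx ?_, by simp⟩
      rw [← hlast, ← h, sub_add_cancel]
  have hgi : Function.Injective i.succAbove := Fin.succAbove_right_injective
  let e1 : Fin m ≃ Set.range f := Equiv.ofInjective f hinj
  let e2 : Fin m ≃ Set.range i.succAbove := Equiv.ofInjective _ hgi
  let π : Equiv.Perm (Fin m) := (e1.trans (Equiv.setCongr hrange)).trans e2.symm
  have hcomp : ∀ j, i.succAbove (π j) = f j := by
    intro j
    have h1 := e2.apply_symm_apply ((Equiv.setCongr hrange) (e1 j))
    have hval : i.succAbove (e2.symm ((Equiv.setCongr hrange) (e1 j)))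
        = (((Equiv.setCongr hrange) (e1 j) : Set.range i.succAbove) : Fin (m+1)) :=
      congrArg Subtype.val h1
    exact hval
  have key : M.submatrix f f = M.submatrix Fin.castSucc Fin.castSucc := by
    apply Matrix.ext; intro j k
    exact hM d _ _
  calc (M.submatrix i.succAbove i.succAbove).det
      = ((M.submatrix i.succAbove i.succAbove).submatrix π π).det :=
        (det_submatrix_equiv_self π _).symm
    _ = (M.submatrix f f).det := by
        congr 1; ext j k
        simp only [submatrix_apply, submatrix_submatrix, Function.comp_apply, hcomp]
    _ = (M.submatrix Fin.castSucc Fin.castSucc).det := by rw [key]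

open Matrix in
/-- Determinant with column `i` replaced by the `i`-th basis vector is the
corresponding principal minor. -/
private lemma det_updateColumn_single {n : ℕ} (M : Matrix (Fin (n+1)) (Fin (n+1)) ℂ[X])
    (i : Fin (n+1)) :
    (M.updateCol i (Pi.single i 1)).det = (M.submatrix i.succAbove i.succAbove).det := by
  have h1 : (M.updateCol i (Pi.single i 1)).det = adjugate Mᵀ i i := by
    rw [adjugate_apply, updateRow_transpose, det_transpose]
  rw [h1, adjugate_fin_succ_eq_det_submatrix]
  rw [← transpose_submatrix, det_transpose]
  rw [Even.neg_one_pow ⟨(i:ℕ), rfl⟩, one_mul]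

/-- If `C` is an `(m+1) × (m+1)` circulant matrix with (monic) characteristic
polynomial `p`, and `C_m` is the principal submatrix on the first `m` rows and
columns, then `p' = (m+1) · charpoly(C_m)`; in particular the spectrum of `C_m`
(with multiplicities) is exactly the set of critical points of `p`. -/
theorem circulant_submatrix_derivative (m : ℕ) (c : Fin (m + 1) → ℂ)
    (C : Matrix (Fin (m + 1)) (Fin (m + 1)) ℂ)
    (hC : ∀ j k : Fin (m + 1), C j k = c (k - j)) :
    Polynomial.derivative (Matrix.charpoly C)
      = Polynomial.C ((m + 1 : ℕ) : ℂ)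
          * Matrix.charpoly (C.submatrix Fin.castSucc Fin.castSucc) := by
  open Matrix in
  have hshift : ∀ d x y : Fin (m+1), charmatrix C (x + d) (y + d) = charmatrix C x y := by
    intro d x y
    have hCe : C (x + d) (y + d) = C x y := by rw [hC, hC, add_sub_add_right_eq_sub]
    by_cases h : x = y
    · subst h; rw [charmatrix_apply_eq, charmatrix_apply_eq, hCe]
    · rw [charmatrix_apply_ne _ _ _ (by simpa using h), charmatrix_apply_ne _ _ _ h, hCe]
  have hsingle : ∀ i : Fin (m+1),
      (fun j => derivative ((Matrix.charmatrix C) j i)) = Pi.single i (1:ℂ[X]) := by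
    intro i
    funext j
    by_cases h : j = i
    · subst h; rw [Matrix.charmatrix_apply_eq, Pi.single_eq_same]; simp
    · rw [Matrix.charmatrix_apply_ne _ _ _ h, Pi.single_eq_of_ne h]; simp
  have hsub : Matrix.charmatrix (C.submatrix Fin.castSucc Fin.castSucc)
      = (Matrix.charmatrix C).submatrix Fin.castSucc Fin.castSucc := by
    apply Matrix.ext; intro j k
    simp only [Matrix.submatrix_apply, Matrix.charmatrix_apply, Matrix.diagonal_apply,
      Fin.castSucc_inj]
  rw [Matrix.charpoly, my_derivative_det]
  have : ∀ i : Fin (m+1),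
      ((Matrix.charmatrix C).updateCol i fun j =>
          derivative (Matrix.charmatrix C j i)).det
        = ((Matrix.charmatrix C).submatrix Fin.castSucc Fin.castSucc).det := by
    intro i
    rw [hsingle i, det_updateColumn_single, minor_shift _ hshift]
  simp only [this]
  rw [Finset.sum_const, Finset.card_univ, Fintype.card_fin, Matrix.charpoly, hsub,
    nsmul_eq_mul]
  congr 1
end

section
/- Let C be an n×n circulant matrix and let C_{n-1} be the principal submatrix formed by its first n−1 rows and columns. Then C_{n-1} is a normal matrix if and only if all the eigenvalues of C lie on a straight line in the complex plane. -/
/-!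
Write `C = circulant v`. Since `C` is normal, comparing the `(i, j)` entries of `C Cᴴ = Cᴴ C`
with those of `C_{n-1}` shows that `C_{n-1}` is normal iff the last column `u` and the
conjugated last row `w` of `C` satisfy `u uᴴ = w wᴴ`, i.e. `u = λ w` with `|λ| = 1`. Writing
`λ = α / ᾱ`, this says that `ᾱ (C - v₀ I)` is Hermitian. For a normal matrix `A`, the matrix
`ᾱ (A - β I)` is Hermitian iff it has real spectrum, i.e. iff the eigenvalues of `A` lie on the
line `β + ℝ α`.
-/

open ComplexConjugate Matrix

namespace Complex

lemma conj_eq_iff_exists_eq_mul_ofReal_add {α β μ : ℂ} (hα : α ≠ 0) :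
    conj (conj α * (μ - β)) = conj α * (μ - β) ↔ ∃ t : ℝ, μ = α * t + β := by
  constructor
  · intro h
    obtain ⟨r, hr⟩ := conj_eq_iff_real.mp h
    refine ⟨r / normSq α, ?_⟩
    have hnα : (normSq α : ℂ) ≠ 0 := by exact_mod_cast (normSq_pos.mpr hα).ne'
    rw [ofReal_div, ← hr, mul_div_assoc', ← mul_assoc, mul_conj, mul_div_cancel_left₀ _ hnα]
    ring
  · rintro ⟨t, rfl⟩
    simp only [add_sub_cancel_right, map_mul, conj_conj, conj_ofReal]
    ring

lemma forall_mul_star_eq_star_mul_iff {ι : Type*} (u w : ι → ℂ) :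
    (∀ a b, u a * star (u b) = star (w a) * w b) ↔
      ∃ α ≠ 0, ∀ a, star α * u a = α * star (w a) := by
  set v : ι → ℂ := fun a ↦ conj (w a)
  have hw : ∀ a, w a = conj (v a) := fun a ↦ (conj_conj (w a)).symm
  simp only [star_def, hw, conj_conj]
  constructor
  · intro h
    by_cases hu : ∀ a, u a = 0
    · refine ⟨1, one_ne_zero, fun a ↦ ?_⟩
      have := h a a
      simp_all
    push Not at hu
    obtain ⟨a₀, ha₀⟩ := hu
    -- `u` and `v` are proportional, so it suffices to match `α / ᾱ` with their ratio at `a₀`.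
    have key : ∀ α : ℂ, conj α * u a₀ = α * v a₀ → ∀ a, conj α * u a = α * v a := by
      intro α hα a
      apply mul_right_cancel₀ ((map_ne_zero conj).mpr ha₀)
      have h2 := congrArg conj hα
      simp only [map_mul, conj_conj] at h2
      linear_combination conj α * h a a₀ - v a * h2
    by_cases hα : u a₀ + conj (v a₀) = 0
    · refine ⟨I * (u a₀ - conj (v a₀)), ?_, key _ ?_⟩
      · refine mul_ne_zero I_ne_zero fun h' ↦ ha₀ ?_
        linear_combination (h' + hα) / 2
      · simp only [map_mul, map_sub, conj_I, conj_conj]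
        linear_combination -I * h a₀ a₀
    · refine ⟨u a₀ + conj (v a₀), hα, key _ ?_⟩
      simp only [map_add, conj_conj]
      linear_combination h a₀ a₀
  · rintro ⟨α, hα, h⟩ a b
    have hb := congrArg conj (h b)
    simp only [map_mul, conj_conj] at hb
    apply mul_left_cancel₀ (mul_ne_zero hα ((map_ne_zero conj).mpr hα))
    linear_combination α * conj (u b) * h a + α * v a * hb

end Complex

lemma IsStarNormal.isSelfAdjoint_smul_sub_algebraMap_iff {A : Type*} [TopologicalSpace A]
    [Ring A] [StarRing A] [Algebra ℂ A] [ContinuousFunctionalCalculus ℂ A IsStarNormal]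
    (a : A) [IsStarNormal a] {α : ℂ} (hα : α ≠ 0) (β : ℂ) :
    IsSelfAdjoint (star α • (a - algebraMap ℂ A β)) ↔
      ∀ μ ∈ spectrum ℂ a, ∃ t : ℝ, μ = α * t + β := by
  have hcfc : star α • (a - algebraMap ℂ A β) = cfc (fun z ↦ star α * (z - β)) a := by
    rw [cfc_const_mul (star α) (· - β) a, cfc_sub (fun z ↦ z) (fun _ ↦ β) a, cfc_id' ℂ a,
      cfc_const β a]
  rw [hcfc, isSelfAdjoint_iff, ← cfc_star, cfc_eq_cfc_iff_eqOn]
  exact forall₂_congr fun μ _ ↦ Complex.conj_eq_iff_exists_eq_mul_ofReal_add hα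

namespace Matrix

open scoped Matrix.Norms.L2Operator in
lemma isHermitian_smul_sub_scalar_iff {n : Type*} [Fintype n] [DecidableEq n]
    {A : Matrix n n ℂ} (hA : A * Aᴴ = Aᴴ * A) {α : ℂ} (hα : α ≠ 0) (β : ℂ) :
    (star α • (A - scalar n β)).IsHermitian ↔
      ∀ μ ∈ A.charpoly.roots, ∃ t : ℝ, μ = α * t + β := by
  have : IsStarNormal A := ⟨hA.symm⟩
  rw [isHermitian_iff_isSelfAdjoint]
  refine (IsStarNormal.isSelfAdjoint_smul_sub_algebraMap_iff A hα β).trans ?_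
  simp only [Polynomial.mem_roots A.charpoly_monic.ne_zero, mem_spectrum_iff_isRoot_charpoly]

lemma mul_apply_castSucc {R : Type*} [NonUnitalNonAssocSemiring R] {m : ℕ}
    (X Y : Matrix (Fin (m + 1)) (Fin (m + 1)) R) (i j : Fin m) :
    (X * Y) i.castSucc j.castSucc =
      (X.submatrix Fin.castSucc Fin.castSucc * Y.submatrix Fin.castSucc Fin.castSucc) i j +
        X i.castSucc (Fin.last m) * Y (Fin.last m) j.castSucc := by
  simp only [mul_apply, Fin.sum_univ_castSucc, submatrix_apply]

lemma submatrix_castSucc_normal_iff {R : Type*} [NonUnitalNonAssocRing R] [Star R] {m : ℕ}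
    {A : Matrix (Fin (m + 1)) (Fin (m + 1)) R} (hA : A * Aᴴ = Aᴴ * A) :
    A.submatrix Fin.castSucc Fin.castSucc * (A.submatrix Fin.castSucc Fin.castSucc)ᴴ =
        (A.submatrix Fin.castSucc Fin.castSucc)ᴴ * A.submatrix Fin.castSucc Fin.castSucc ↔
      ∀ i j : Fin m, A i.castSucc (Fin.last m) * star (A j.castSucc (Fin.last m)) =
        star (A (Fin.last m) i.castSucc) * A (Fin.last m) j.castSucc := by
  rw [← ext_iff, conjTranspose_submatrix]
  refine forall₂_congr fun i j ↦ ?_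
  have h := congrFun₂ hA i.castSucc j.castSucc
  simp only [mul_apply_castSucc, conjTranspose_apply] at h
  constructor <;> intro h' <;> rw [h'] at h
  exacts [add_left_cancel h, add_right_cancel h]

lemma circulant_mul_conjTranspose_comm {R n : Type*} [CommSemiring R] [StarRing R] [Fintype n]
    [AddCommGroup n] (v : n → R) :
    circulant v * (circulant v)ᴴ = (circulant v)ᴴ * circulant v := by
  rw [conjTranspose_circulant, circulant_mul_comm]

lemma circulant_castSucc_last {α : Type*} {m : ℕ} (v : Fin (m + 1) → α) (i : Fin m) :
    circulant v i.castSucc (Fin.last m) = v i.succ := by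
  rw [circulant_apply, sub_eq_add_neg, Fin.neg_last, Fin.coeSucc_eq_succ]

lemma circulant_last_castSucc {α : Type*} {m : ℕ} (v : Fin (m + 1) → α) (i : Fin m) :
    circulant v (Fin.last m) i.castSucc = v (-i.succ) := by
  rw [circulant_apply, ← neg_sub, sub_eq_add_neg, Fin.neg_last, Fin.coeSucc_eq_succ]

lemma exists_isHermitian_smul_circulant_sub_scalar_iff {R n : Type*} [CommRing R] [StarRing R]
    [AddGroup n] [Fintype n] [DecidableEq n] (v : n → R) (α : R) :
    (∃ β, (star α • (circulant v - scalar n β)).IsHermitian) ↔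
      ∀ k ≠ 0, star α * v k = α * star (v (-k)) := by
  have hcirc : ∀ β, star α • (circulant v - scalar n β) =
      circulant (star α • (v - Pi.single 0 β)) := fun β ↦ by
    rw [← circulant_single, ← circulant_sub, circulant_smul]
  simp only [hcirc, IsHermitian, conjTranspose_circulant, circulant_inj, funext_iff,
    Pi.star_apply, Pi.smul_apply, Pi.sub_apply, smul_eq_mul, star_mul, star_star, star_sub]
  constructor
  · rintro ⟨β, h⟩ k hk
    have := h k
    rwa [Pi.single_eq_of_ne hk, Pi.single_eq_of_ne (neg_ne_zero.mpr hk), star_zero,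
      sub_zero, sub_zero, mul_comm, eq_comm] at this
  · intro h
    refine ⟨v 0, fun k ↦ ?_⟩
    rcases eq_or_ne k 0 with rfl | hk
    · simp
    · rw [Pi.single_eq_of_ne hk, Pi.single_eq_of_ne (neg_ne_zero.mpr hk), star_zero, sub_zero,
        sub_zero, mul_comm, h k hk]

end Matrix

/-- The principal `(m × m)`-submatrix `C_m` (first `m` rows and columns) of an
`(m+1) × (m+1)` circulant matrix `C` is normal if and only if all the eigenvalues
of `C` lie on a straight line in the complex plane. -/
theorem circulant_submatrix_normal_iff_collinear (m : ℕ) (c : Fin (m + 1) → ℂ)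
    (C : Matrix (Fin (m + 1)) (Fin (m + 1)) ℂ)
    (hC : ∀ j k : Fin (m + 1), C j k = c (k - j))
    (Cm : Matrix (Fin m) (Fin m) ℂ)
    (hCm : Cm = C.submatrix Fin.castSucc Fin.castSucc) :
    Cm * Cm.conjTranspose = Cm.conjTranspose * Cm ↔
      ∃ α β : ℂ, α ≠ 0 ∧
        ∀ μ ∈ (Matrix.charpoly C).roots, ∃ t : ℝ, μ = α * (t : ℂ) + β := by
  set v : Fin (m + 1) → ℂ := fun k ↦ c (-k)
  obtain rfl : C = circulant v := by ext j k; rw [hC, circulant_apply, ← neg_sub]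
  have hnormal := circulant_mul_conjTranspose_comm v
  rw [hCm, submatrix_castSucc_normal_iff hnormal, Complex.forall_mul_star_eq_star_mul_iff]
  simp only [circulant_castSucc_last, circulant_last_castSucc]
  have hline : ∀ α ≠ 0, (∀ i : Fin m, star α * v i.succ = α * star (v (-i.succ))) ↔
      ∃ β, ∀ μ ∈ (circulant v).charpoly.roots, ∃ t : ℝ, μ = α * t + β := fun α hα ↦ by
    have h := exists_isHermitian_smul_circulant_sub_scalar_iff v α
    simp only [Fin.forall_fin_succ, ne_eq, not_true_eq_false, IsEmpty.forall_iff,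
      Fin.succ_ne_zero, not_false_eq_true, forall_const, true_and] at h
    rw [← h]
    exact exists_congr fun β ↦ isHermitian_smul_sub_scalar_iff hnormal hα β
  constructor
  · rintro ⟨α, hα, h⟩
    obtain ⟨β, hβ⟩ := (hline α hα).mp h
    exact ⟨α, β, hα, hβ⟩
  · rintro ⟨α, β, hα, hβ⟩
    exact ⟨α, hα, (hline α hα).mpr ⟨β, hβ⟩⟩
end

section
/- (Schoenberg's inequality, centered case) Let λ_1, ..., λ_n be the roots of a complex polynomial p of degree n ≥ 2 with Σ_{j=1}^n λ_j = 0, and let w_1, ..., w_{n-1} be the roots of p'. Then Σ_{k=1}^{n-1} |w_k|^2 ≤ ((n−2)/n) Σ_{j=1}^n |λ_j|^2. -/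
/-!
Let `P = 1 - J/n` be the orthogonal projection onto the hyperplane `∑ xᵢ = 0` and let
`Λ = diag λ`. Since `P² = P`, the compression `PΛP` has the characteristic polynomial of
`ΛP = Λ - λ·1ᵀ/n`, a rank-one perturbation of a diagonal matrix; the matrix determinant lemma
gives `n · charpoly(ΛP) = X · p'`, so the eigenvalues of `PΛP` are `0` and the `w_k`.
Schur's inequality (unitary triangularisation, one eigenvector at a time) bounds
`∑ |w_k|²` by the squared Frobenius norm of `PΛP`, and when `∑ λ_j = 0` its entries are
`δᵢⱼ λᵢ - (λᵢ + λⱼ)/n`, whose squared moduli sum to `(n - 2)/n · ∑ |λ_j|²`.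
-/

open Polynomial Finset Matrix

theorem Polynomial.eval_derivative_prod_X_sub_C {R ι : Type*} [CommRing R] [DecidableEq ι]
    (s : Finset ι) (f : ι → R) (x : R) :
    (derivative (∏ j ∈ s, (X - C (f j)))).eval x = ∑ j ∈ s, ∏ i ∈ s.erase j, (x - f i) := by
  simp [derivative_prod_finset, eval_finsetSum, eval_prod]

namespace Matrix

variable {ι κ R 𝕜 : Type*} [Fintype ι] [Fintype κ]

theorem charpoly_conjTranspose_mul_mul [DecidableEq ι] [CommRing R] [StarRing R]
    {U : Matrix ι ι R} (hU : Uᴴ * U = 1) (B : Matrix ι ι R) :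
    (Uᴴ * B * U).charpoly = B.charpoly := by
  rw [mul_assoc, charpoly_mul_comm, mul_assoc, mul_eq_one_comm.mp hU, mul_one]

theorem sum_sum_norm_sq_eq_re_trace [RCLike 𝕜] (A : Matrix κ ι 𝕜) :
    ∑ i, ∑ j, ‖A i j‖ ^ 2 = RCLike.re (trace (Aᴴ * A)) := by
  simp only [trace, diag, mul_apply, conjTranspose_apply, map_sum, RCLike.star_def,
    RCLike.conj_mul, ← RCLike.ofReal_pow, RCLike.ofReal_re]
  exact sum_comm

theorem sum_sum_norm_sq_conjTranspose_mul_mul [DecidableEq ι] [RCLike 𝕜] {U : Matrix ι ι 𝕜}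
    (hU : Uᴴ * U = 1) (B : Matrix ι ι 𝕜) :
    ∑ i, ∑ j, ‖(Uᴴ * B * U) i j‖ ^ 2 = ∑ i, ∑ j, ‖B i j‖ ^ 2 := by
  have hU' : U * Uᴴ = 1 := mul_eq_one_comm.mp hU
  rw [sum_sum_norm_sq_eq_re_trace, sum_sum_norm_sq_eq_re_trace]
  congr 1
  simp only [conjTranspose_mul, conjTranspose_conjTranspose, Matrix.mul_assoc]
  rw [← Matrix.mul_assoc U, hU', Matrix.one_mul, trace_mul_comm, Matrix.mul_assoc,
    Matrix.mul_assoc, hU', Matrix.mul_one]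

theorem exists_unitary_col_eq [DecidableEq ι] [RCLike 𝕜] (i₀ : ι)
    {u : EuclideanSpace 𝕜 ι} (hu : ‖u‖ = 1) :
    ∃ U : Matrix ι ι 𝕜, Uᴴ * U = 1 ∧ ∀ i, U i i₀ = u i := by
  have hone : Orthonormal 𝕜 (({i₀} : Set ι).domRestrict fun _ => u) := by
    simp [Set.domRestrict_apply, hu]
  obtain ⟨b, hb⟩ := hone.exists_orthonormalBasis_extension_of_card_eq (by simp)
  refine ⟨(EuclideanSpace.basisFun ι 𝕜).toBasis.toMatrix b, by simp, fun i => ?_⟩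
  simp [Module.Basis.toMatrix_apply, hb i₀ rfl]

theorem exists_mulVec_eq_smul_of_isRoot_charpoly [DecidableEq ι] {K : Type*} [Field K]
    {B : Matrix ι ι K} {μ : K} (hμ : B.charpoly.IsRoot μ) : ∃ v ≠ 0, B *ᵥ v = μ • v := by
  obtain ⟨v, hv0, hv⟩ : ∃ v ≠ 0, (scalar ι μ - B) *ᵥ v = 0 :=
    exists_mulVec_eq_zero_iff.2 (by rw [← eval_charpoly]; exact hμ)
  refine ⟨v, hv0, ?_⟩
  rw [sub_mulVec, sub_eq_zero, scalar_apply, ← smul_one_eq_diagonal, smul_mulVec,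
    one_mulVec] at hv
  exact hv.symm

theorem exists_unitary_conj_col_eq_of_mulVec_eq_smul [DecidableEq ι] [RCLike 𝕜] (i₀ : ι)
    {B : Matrix ι ι 𝕜} {μ : 𝕜} {v : ι → 𝕜} (hv0 : v ≠ 0) (hBv : B *ᵥ v = μ • v) :
    ∃ U : Matrix ι ι 𝕜, Uᴴ * U = 1 ∧ ∀ i, (Uᴴ * B * U) i i₀ = if i = i₀ then μ else 0 := by
  have hv0' : WithLp.toLp 2 v ≠ 0 := by simpa using hv0
  obtain ⟨U, hU, hcol⟩ := exists_unitary_col_eq i₀ (norm_smul_inv_norm (𝕜 := 𝕜) hv0')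
  have hBU : ∀ l, (B * U) l i₀ = μ * U l i₀ := by
    intro l
    have hl : ∑ x, B l x * v x = μ * v l := congrFun hBv l
    simp only [mul_apply, hcol, WithLp.ofLp_smul, Pi.smul_apply, smul_eq_mul,
      mul_left_comm (B l _), ← mul_sum, hl]
    ring
  refine ⟨U, hU, fun i => ?_⟩
  calc (Uᴴ * B * U) i i₀ = μ * (Uᴴ * U) i i₀ := by
        simp only [Matrix.mul_assoc, mul_apply (M := Uᴴ), hBU, mul_sum]
        exact sum_congr rfl fun _ _ => by ring
    _ = if i = i₀ then μ else 0 := by simp [hU, one_apply]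

theorem charpoly_eq_X_sub_C_mul_charpoly_submatrix_succ [CommRing R] {m : ℕ}
    (T : Matrix (Fin (m + 1)) (Fin (m + 1)) R) (h : ∀ i ≠ 0, T i 0 = 0) :
    T.charpoly = (X - C (T 0 0)) * (T.submatrix Fin.succ Fin.succ).charpoly := by
  have hsub : (charmatrix T).submatrix Fin.succ Fin.succ
      = charmatrix (T.submatrix Fin.succ Fin.succ) := by
    ext i j
    by_cases hij : i = j
    · simp [hij, charmatrix_apply_eq]
    · simp [hij]
  rw [charpoly, det_succ_column_zero, sum_eq_single 0]
  · simp [charmatrix_apply_eq, charpoly, ← hsub]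
  · intro i _ hi
    simp [charmatrix_apply_ne _ _ _ hi, h i hi]
  · simp

/-- **Schur's inequality**. -/
theorem sum_norm_sq_roots_charpoly_le {m : ℕ} (B : Matrix (Fin m) (Fin m) ℂ) :
    (B.charpoly.roots.map (‖·‖ ^ 2)).sum ≤ ∑ i, ∑ j, ‖B i j‖ ^ 2 := by
  induction m with
  | zero => simp [charpoly_isEmpty]
  | succ m ih =>
    obtain ⟨μ, hμ⟩ := IsAlgClosed.exists_root B.charpoly (by
      rw [charpoly_degree_eq_dim, Fintype.card_fin]; exact_mod_cast m.succ_ne_zero)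
    obtain ⟨v, hv0, hBv⟩ := exists_mulVec_eq_smul_of_isRoot_charpoly hμ
    obtain ⟨U, hU, hcol⟩ := exists_unitary_conj_col_eq_of_mulVec_eq_smul 0 hv0 hBv
    set T := Uᴴ * B * U
    set T' := T.submatrix Fin.succ Fin.succ
    have hroots : B.charpoly.roots = μ ::ₘ T'.charpoly.roots := by
      rw [← charpoly_conjTranspose_mul_mul hU,
        charpoly_eq_X_sub_C_mul_charpoly_submatrix_succ T (fun i hi => by simp [hcol, hi]),
        roots_mul ((monic_X_sub_C _).mul (charpoly_monic _)).ne_zero, hcol, roots_X_sub_C]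
      rfl
    have hμT : ‖μ‖ ^ 2 ≤ ∑ j, ‖T 0 j‖ ^ 2 := by
      simpa [hcol] using single_le_sum (f := fun j => ‖T 0 j‖ ^ 2)
        (fun _ _ => by positivity) (mem_univ 0)
    have hT' : ∑ i, ∑ j, ‖T' i j‖ ^ 2 ≤ ∑ i : Fin m, ∑ j, ‖T i.succ j‖ ^ 2 := by
      refine sum_le_sum fun i _ => ?_
      rw [Fin.sum_univ_succ (fun j => ‖T i.succ j‖ ^ 2)]
      exact le_add_of_nonneg_left (by positivity)
    rw [hroots, Multiset.map_cons, Multiset.sum_cons,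
      ← sum_sum_norm_sq_conjTranspose_mul_mul hU, Fin.sum_univ_succ]
    exact add_le_add hμT ((ih T').trans hT')

def centeringMatrix (K : Type*) [Field K] (n : ℕ) : Matrix (Fin n) (Fin n) K :=
  1 - (n : K)⁻¹ • of fun _ _ => 1

variable {K : Type*} [Field K] {n : ℕ}

theorem centeringMatrix_apply (i j : Fin n) :
    centeringMatrix K n i j = (if i = j then 1 else 0) - (n : K)⁻¹ := by
  simp [centeringMatrix, one_apply]

theorem centeringMatrix_mul_self (hn : (n : K) ≠ 0) :
    centeringMatrix K n * centeringMatrix K n = centeringMatrix K n := by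
  ext i j
  simp only [mul_apply, centeringMatrix_apply, sub_mul, mul_sub, ite_mul, mul_ite, one_mul,
    mul_one, zero_mul, mul_zero, sum_sub_distrib, sum_ite_eq, sum_ite_eq', mem_univ, if_true,
    sum_const, card_univ, Fintype.card_fin, nsmul_eq_mul]
  field_simp
  split_ifs <;> ring

theorem charpoly_centeringMatrix_mul_diagonal_mul (hn : (n : K) ≠ 0) (d : Fin n → K) :
    (centeringMatrix K n * diagonal d * centeringMatrix K n).charpoly
      = (diagonal d * centeringMatrix K n).charpoly := by
  rw [Matrix.mul_assoc, charpoly_mul_comm, Matrix.mul_assoc, centeringMatrix_mul_self hn]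

theorem eval_charpoly_diagonal_mul_centeringMatrix (hn : (n : K) ≠ 0) (d : Fin n → K) {x : K}
    (hx : ∀ i, x - d i ≠ 0) :
    (diagonal d * centeringMatrix K n).charpoly.eval x
      = x * (n : K)⁻¹ * ∑ j, ∏ i ∈ univ.erase j, (x - d i) := by
  have hsplit : scalar (Fin n) x - diagonal d * centeringMatrix K n
      = diagonal (fun i => x - d i)
          * (1 + vecMulVec (fun i => d i / (x - d i)) fun _ => (n : K)⁻¹) := by
    ext i j
    simp only [sub_apply, scalar_apply, diagonal_mul, centeringMatrix_apply, mul_add, add_apply,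
      one_apply, vecMulVec_apply, diagonal_apply]
    field_simp [hx i]
    split_ifs <;> ring
  have hsum : 1 + (fun _ => (n : K)⁻¹) ⬝ᵥ (fun i => d i / (x - d i))
      = (n : K)⁻¹ * ∑ j, x / (x - d j) := by
    have hterm : ∀ j, x / (x - d j) = 1 + d j / (x - d j) := fun j => by
      field_simp [hx j]
      ring
    simp only [dotProduct, ← mul_sum, hterm, sum_add_distrib, sum_const, card_univ,
      Fintype.card_fin, nsmul_eq_mul, mul_one]
    field_simp
  rw [eval_charpoly, hsplit, vecMulVec_eq Unit, det_mul, det_diagonal,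
    det_one_add_replicateCol_mul_replicateRow, hsum, mul_sum, mul_sum, mul_sum]
  refine sum_congr rfl fun j _ => ?_
  rw [← mul_prod_erase univ _ (mem_univ j)]
  field_simp [hx j]

theorem C_mul_charpoly_diagonal_mul_centeringMatrix [CharZero K] (hn : n ≠ 0) (d : Fin n → K) :
    C (n : K) * (diagonal d * centeringMatrix K n).charpoly
      = X * derivative (∏ j, (X - C (d j))) := by
  have hp : (∏ j, (X - C (d j))) ≠ 0 :=
    (monic_prod_of_monic _ _ fun j _ => monic_X_sub_C (d j)).ne_zero
  refine eq_of_infinite_eval_eq _ _ <|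
    (finite_setOfPred_isRoot hp).infinite_compl.mono fun x hx => ?_
  have hx : ∀ i, x - d i ≠ 0 := by simpa [eval_prod, prod_ne_zero_iff] using hx
  simp only [Set.mem_ofPred_eq, eval_mul, eval_C, eval_X,
    eval_charpoly_diagonal_mul_centeringMatrix (Nat.cast_ne_zero.2 hn) d hx,
    eval_derivative_prod_X_sub_C]
  field_simp

theorem centeringMatrix_mul_diagonal_mul_apply {d : Fin n → K} (hd : ∑ j, d j = 0)
    (i j : Fin n) :
    (centeringMatrix K n * diagonal d * centeringMatrix K n) i j
      = (if i = j then d i else 0) - (d i + d j) / n := by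
  rw [mul_apply]
  simp only [mul_diagonal, centeringMatrix_apply, sub_mul, mul_sub, ite_mul, mul_ite,
    one_mul, mul_one, zero_mul, mul_zero, sum_sub_distrib, sum_ite_eq, sum_ite_eq', mem_univ,
    if_true, ← sum_mul, ← mul_sum, hd]
  split_ifs with h
  · subst h; ring
  · ring

open ComplexConjugate in
theorem sum_sum_norm_sq_centeringMatrix_mul_diagonal_mul (hn : n ≠ 0) {d : Fin n → ℂ}
    (hd : ∑ j, d j = 0) :
    ∑ i, ∑ j, ‖(centeringMatrix ℂ n * diagonal d * centeringMatrix ℂ n) i j‖ ^ 2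
      = ((n : ℝ) - 2) / n * ∑ j, ‖d j‖ ^ 2 := by
  have hd' : ∑ j, conj (d j) = 0 := by rw [← map_sum, hd, map_zero]
  have hentry : ∀ i j, conj ((if i = j then d i else 0) - (d i + d j) / n)
        * ((if i = j then d i else 0) - (d i + d j) / n)
      = (if i = j then (1 - 4 / n) * (conj (d i) * d i) else 0)
        + (conj (d i) + conj (d j)) * (d i + d j) / n ^ 2 := fun i j => by
    split_ifs with h
    · subst h; simp only [map_sub, map_div₀, map_add, map_natCast]; ring
    · simp only [map_sub, map_div₀, map_add, map_natCast, map_zero]; ring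
  have hpair : ∑ i, ∑ j, (conj (d i) + conj (d j)) * (d i + d j)
      = 2 * n * ∑ j, conj (d j) * d j := by
    simp only [add_mul, mul_add, sum_add_distrib, ← mul_sum, ← sum_mul, hd, hd', mul_zero,
      zero_mul, sum_const, card_univ, Fintype.card_fin, nsmul_eq_mul]
    rw [sum_congr rfl fun x _ => mul_left_comm (conj (d x)) (n : ℂ) (d x), ← mul_sum]
    ring
  apply Complex.ofReal_injective
  push_cast
  simp only [centeringMatrix_mul_diagonal_mul_apply hd, ← Complex.conj_mul', hentry,
    sum_add_distrib, sum_ite_eq, mem_univ, if_true, ← sum_div, hpair, ← mul_sum]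
  field_simp
  ring

end Matrix

/-- Schoenberg's inequality, centered case: if the roots `λ_j` of a degree-`n`
complex polynomial `p` (`n ≥ 2`) sum to zero and `w_k` are the roots of `p'`, then
`Σ |w_k|² ≤ ((n-2)/n) Σ |λ_j|²`. -/
theorem schoenberg_centered (n : ℕ) (hn : 2 ≤ n)
    (lam : Fin n → ℂ) (w : Fin (n - 1) → ℂ) (p : ℂ[X])
    (hp : p = ∏ j : Fin n, (X - C (lam j)))
    (hsum : ∑ j : Fin n, lam j = 0)
    (hw : Polynomial.derivative p = C ((n : ℕ) : ℂ) * ∏ k : Fin (n - 1), (X - C (w k))) :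
    ∑ k : Fin (n - 1), ‖w k‖ ^ 2
      ≤ (((n : ℝ) - 2) / n) * ∑ j : Fin n, ‖lam j‖ ^ 2 := by
  have hn0 : n ≠ 0 := by omega
  set B := centeringMatrix ℂ n * diagonal lam * centeringMatrix ℂ n
  have hchar : B.charpoly = ((0 ::ₘ univ.val.map w).map fun a => X - C a).prod := by
    have h := C_mul_charpoly_diagonal_mul_centeringMatrix hn0 lam
    rw [← hp, hw, ← charpoly_centeringMatrix_mul_diagonal_mul (by exact_mod_cast hn0) lam,
      mul_left_comm] at h
    simpa [prod_eq_multiset_prod, Function.comp_def] using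
      mul_left_cancel₀ (by simpa using hn0) h
  calc ∑ k, ‖w k‖ ^ 2 = (B.charpoly.roots.map (‖·‖ ^ 2)).sum := by
        rw [hchar, roots_multiset_prod_X_sub_C]
        simp [Function.comp_def, sum_eq_multiset_sum]
    _ ≤ ∑ i, ∑ j, ‖B i j‖ ^ 2 := sum_norm_sq_roots_charpoly_le B
    _ = ((n : ℝ) - 2) / n * ∑ j, ‖lam j‖ ^ 2 :=
      sum_sum_norm_sq_centeringMatrix_mul_diagonal_mul hn0 hsum
end
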